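/- arXiv:2512.03204 — 4 statements merged into one kernel-verified Lean document; each statement's English description precedes it below -/
import Mathlib

section
/- Let P be an n×n stochastic matrix with unique stationary distribution π such that I − P + eπ' is invertible, and suppose P depends differentiably on a parameter θ with π also differentiable. Then the gradient of the average reward η := π'r satisfies ∇η = π'(∇P)(I − P + eπ')⁻¹ r, for any reward vector r ∈ ℝ^n. -/
open Matrix Finset

/-! Differentiating `π'P = π'` and `π'e = 1` gives `(∇π)'(I - P) = π'(∇P)` and `(∇π)'e = 0`,
hence `(∇π)'(I - P + eπ') = π'(∇P)`. Inverting the fundamental matrix `I - P + eπ'` yields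
`(∇π)' = π'(∇P)(I - P + eπ')⁻¹`, and `∇η = (∇π)'r`. -/

section

variable {ι κ : Type*} [Fintype ι]

lemma hasDerivAt_vecMul_apply {v : ℝ → ι → ℝ} {M : ℝ → Matrix ι κ ℝ} {v' : ι → ℝ}
    {M' : Matrix ι κ ℝ} {t : ℝ} (hv : ∀ i, HasDerivAt (fun s => v s i) (v' i) t)
    (hM : ∀ i j, HasDerivAt (fun s => M s i j) (M' i j) t) (j : κ) :
    HasDerivAt (fun s => vecMul (v s) (M s) j) (vecMul v' (M t) j + vecMul (v t) M' j) t := by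
  simp only [vecMul, dotProduct, ← Finset.sum_add_distrib]
  exact HasDerivAt.fun_sum fun i _ => (hv i).mul (hM i j)

lemma hasDerivAt_dotProduct_const {v : ℝ → ι → ℝ} {v' : ι → ℝ} {t : ℝ}
    (hv : ∀ i, HasDerivAt (fun s => v s i) (v' i) t) (w : ι → ℝ) :
    HasDerivAt (fun s => v s ⬝ᵥ w) (v' ⬝ᵥ w) t :=
  HasDerivAt.fun_sum fun i _ => (hv i).mul_const (w i)

lemma vecMul_one_sub_add_of_const {R : Type*} [CommRing R] [DecidableEq ι]
    (P : Matrix ι ι R) (π x : ι → R) :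
    vecMul x (1 - P + of fun _ j => π j) = x - vecMul x P + (∑ i, x i) • π := by
  rw [vecMul_add, vecMul_sub, vecMul_one]
  congr 1
  ext j
  simp only [vecMul, dotProduct, of_apply, Pi.smul_apply, smul_eq_mul, Finset.sum_mul]

lemma vecMul_fundamental_eq_of_hasDerivAt [DecidableEq ι] {P : ℝ → Matrix ι ι ℝ}
    {π : ℝ → ι → ℝ} {P' : Matrix ι ι ℝ} {π' : ι → ℝ} {t : ℝ}
    (hP : ∀ i j, HasDerivAt (fun s => P s i j) (P' i j) t)
    (hπ : ∀ i, HasDerivAt (fun s => π s i) (π' i) t)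
    (hstat : ∀ s, vecMul (π s) (P s) = π s) (hsum : ∀ s, ∑ i, π s i = 1) :
    vecMul π' (1 - P t + of fun _ j => π t j) = vecMul (π t) P' := by
  have hsum' : ∑ i, π' i = 0 := by
    have h := HasDerivAt.fun_sum (u := univ) fun i _ => hπ i
    simp only [hsum] at h
    exact h.unique (hasDerivAt_const t 1)
  have hstat' : vecMul π' (P t) + vecMul (π t) P' = π' := by
    ext j
    have h := hasDerivAt_vecMul_apply hπ hP j
    simp only [hstat] at h
    exact h.unique (hπ j)
  rw [vecMul_one_sub_add_of_const, hsum', zero_smul, add_zero]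
  exact sub_eq_iff_eq_add'.mpr hstat'.symm

end

theorem stmt3_general {n : ℕ} (P : ℝ → Matrix (Fin n) (Fin n) ℝ)
    (π : ℝ → Fin n → ℝ) (r : Fin n → ℝ) (θ₀ : ℝ)
    (hPdiff : ∀ i j, Differentiable ℝ (fun θ => P θ i j))
    (hπstat : ∀ θ, Matrix.vecMul (π θ) (P θ) = π θ)
    (hπsum : ∀ θ, ∑ i, π θ i = 1)
    (hπdiff : ∀ i, Differentiable ℝ (fun θ => π θ i))
    (hinv : IsUnit (1 - P θ₀ + Matrix.of fun (_ : Fin n) j => π θ₀ j)) :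
    deriv (fun θ => π θ ⬝ᵥ r) θ₀ =
      Matrix.vecMul (π θ₀) (Matrix.of fun i j => deriv (fun t => P t i j) θ₀) ⬝ᵥ
        ((1 - P θ₀ + Matrix.of fun (_ : Fin n) j => π θ₀ j)⁻¹).mulVec r := by
  have hπ : ∀ i, HasDerivAt (fun θ => π θ i) (deriv (fun θ => π θ i) θ₀) θ₀ :=
    fun i => (hπdiff i θ₀).hasDerivAt
  have hP : ∀ i j, HasDerivAt (fun θ => P θ i j)
      (of (fun i j => deriv (fun t => P t i j) θ₀) i j) θ₀ :=
    fun i j => (hPdiff i j θ₀).hasDerivAt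
  rw [(hasDerivAt_dotProduct_const hπ r).deriv, dotProduct_mulVec,
    ← vecMul_fundamental_eq_of_hasDerivAt hP hπ hπstat hπsum, vecMul_vecMul,
    mul_nonsing_inv _ ((isUnit_iff_isUnit_det _).mp hinv), vecMul_one]

/-- If `P θ` is a differentiable family of row-stochastic matrices
with differentiable stationary distributions `π θ`, and `I - P + eπ'` is
invertible at `θ₀`, then the gradient of the average reward `η := π' r`
satisfies `∇η = π' (∇P) (I - P + eπ')⁻¹ r`. -/
theorem stmt3 {n : ℕ} (P : ℝ → Matrix (Fin n) (Fin n) ℝ)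
    (π : ℝ → Fin n → ℝ) (r : Fin n → ℝ) (θ₀ : ℝ)
    (hPdiff : ∀ i j, Differentiable ℝ (fun θ => P θ i j))
    (hPnonneg : ∀ θ i j, 0 ≤ P θ i j)
    (hProw : ∀ θ i, ∑ j, P θ i j = 1)
    (hπstat : ∀ θ, Matrix.vecMul (π θ) (P θ) = π θ)
    (hπnonneg : ∀ θ i, 0 ≤ π θ i)
    (hπsum : ∀ θ, ∑ i, π θ i = 1)
    (hπuniq : ∀ θ (v : Fin n → ℝ), Matrix.vecMul v (P θ) = v →
      (∀ i, 0 ≤ v i) → ∑ i, v i = 1 → v = π θ)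
    (hπdiff : ∀ i, Differentiable ℝ (fun θ => π θ i))
    (hinv : IsUnit (1 - P θ₀ + Matrix.of fun (_ : Fin n) j => π θ₀ j)) :
    deriv (fun θ => π θ ⬝ᵥ r) θ₀ =
      Matrix.vecMul (π θ₀) (Matrix.of fun i j => deriv (fun t => P t i j) θ₀) ⬝ᵥ
        ((1 - P θ₀ + Matrix.of fun (_ : Fin n) j => π θ₀ j)⁻¹).mulVec r :=
  stmt3_general P π r θ₀ hPdiff hπstat hπsum hπdiff hinv
end

section
/- Let P(θ) be a differentiable family of stochastic matrices with unique stationary distribution π(θ), differentiable in θ, and reward vector r. Define J_β := (I − βP)⁻¹ r and η := π'r. Then lim_{β→1⁻} π'(∇P) J_β = ∇η. -/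
/-!
Differentiating `π P = π` and `π e = 1` gives `π ∇P = ∇π (I - P)` with `∇π e = 0`. Put
`B = P - eπ`. Since `B e = 0`, the Sherman–Morrison formula for `I - βP = (I - βB) - β eπ` shows
`w (I - βP)⁻¹ = w (I - βB)⁻¹` for every `w` with `w e = 0` and every `β ≠ 1`. The right-hand side
is continuous at `β = 1`, where `I - B = I - P + eπ` is invertible, and `∇π (I - P) (I - B)⁻¹ = ∇π`
because `∇π (I - B) = ∇π (I - P)`. Hence the limit is `∇π r = ∇η`.
-/

open Matrix Finset Filter Topology

section Calculus

variable {𝕜 : Type*} [NontriviallyNormedField 𝕜] {m n : Type*} [Fintype m] {x : 𝕜}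

theorem HasDerivAt.dotProduct {f g : 𝕜 → m → 𝕜} {f' g' : m → 𝕜}
    (hf : HasDerivAt f f' x) (hg : HasDerivAt g g' x) :
    HasDerivAt (fun t => f t ⬝ᵥ g t) (f' ⬝ᵥ g x + f x ⬝ᵥ g') x := by
  have hsum := HasDerivAt.fun_sum (u := univ) fun i _ =>
    (hasDerivAt_pi.1 hf i).fun_mul (hasDerivAt_pi.1 hg i)
  rw [Finset.sum_add_distrib] at hsum
  exact hsum

theorem HasDerivAt.dotProduct_const {f : 𝕜 → m → 𝕜} {f' : m → 𝕜}
    (hf : HasDerivAt f f' x) (v : m → 𝕜) : HasDerivAt (fun t => f t ⬝ᵥ v) (f' ⬝ᵥ v) x := by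
  simpa using hf.dotProduct (hasDerivAt_const x v)

theorem HasDerivAt.vecMul {f : 𝕜 → m → 𝕜} {A : 𝕜 → Matrix m n 𝕜} {f' : m → 𝕜}
    {A' : Matrix m n 𝕜} (hf : HasDerivAt f f' x)
    (hA : ∀ i j, HasDerivAt (fun t => A t i j) (A' i j) x) :
    HasDerivAt (fun t => f t ᵥ* A t) (f' ᵥ* A x + f x ᵥ* A') x :=
  hasDerivAt_pi.2 fun j => hf.dotProduct (hasDerivAt_pi.2 fun i => hA i j)

theorem vecMul_deriv_eq_of_vecMul_eq_self [DecidableEq m] {π : 𝕜 → m → 𝕜}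
    {P : 𝕜 → Matrix m m 𝕜} {π' : m → 𝕜} {P' : Matrix m m 𝕜} (hπ : HasDerivAt π π' x)
    (hP : ∀ i j, HasDerivAt (fun t => P t i j) (P' i j) x) (hstat : ∀ t, π t ᵥ* P t = π t) :
    π x ᵥ* P' = π' ᵥ* (1 - P x) := by
  have hderiv := hπ.vecMul hP
  simp only [hstat] at hderiv
  rw [vecMul_sub, vecMul_one, eq_sub_iff_add_eq, add_comm]
  exact (hπ.unique hderiv).symm

end Calculus

section Deflation

variable {K : Type*} [Field K] {ι : Type*} [Fintype ι] [DecidableEq ι]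
  {P : Matrix ι ι K} {h π : ι → K}

theorem one_sub_smul_sub_vecMulVec_mulVec (hPh : P *ᵥ h = h) (hπh : π ⬝ᵥ h = 1) (β : K) :
    (1 - β • (P - vecMulVec h π)) *ᵥ h = h := by
  rw [sub_mulVec, smul_mulVec, sub_mulVec, hPh, vecMulVec_mulVec, hπh]
  simp

/-- Sherman–Morrison for the rank-one update `1 - β P = (1 - β (P - h π)) - β h π`. -/
theorem inv_one_sub_smul_eq (hPh : P *ᵥ h = h) (hπh : π ⬝ᵥ h = 1) {β : K} (hβ : β ≠ 1)
    (hA : IsUnit (1 - β • (P - vecMulVec h π)).det) :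
    (1 - β • P)⁻¹ = (1 - β • (P - vecMulVec h π))⁻¹ +
      (β / (1 - β)) • (vecMulVec h π * (1 - β • (P - vecMulVec h π))⁻¹) := by
  set E := vecMulVec h π
  set A := 1 - β • (P - E)
  have hAE : A * E = E := by
    rw [mul_vecMulVec, one_sub_smul_sub_vecMulVec_mulVec hPh hπh]
  have hEE : E * E = E := by
    rw [vecMulVec_mul_vecMulVec, hπh, one_smul]
  have hsplit : 1 - β • P = A - β • E := by
    simp only [A, smul_sub]
    abel
  have hβ' : 1 - β ≠ 0 := sub_ne_zero.2 hβ.symm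
  refine inv_eq_right_inv ?_
  calc (1 - β • P) * (A⁻¹ + (β / (1 - β)) • (E * A⁻¹))
      = 1 + (β / (1 - β) - β - β * (β / (1 - β))) • (E * A⁻¹) := by
        rw [hsplit]
        simp only [sub_mul, mul_add, Matrix.mul_smul, Matrix.smul_mul, ← Matrix.mul_assoc, hAE,
          hEE, mul_nonsing_inv _ hA]
        module
    _ = 1 := by
        rw [show β / (1 - β) - β - β * (β / (1 - β)) = 0 by field_simp; ring, zero_smul, add_zero]

theorem vecMul_inv_one_sub_smul_eq (hPh : P *ᵥ h = h) (hπh : π ⬝ᵥ h = 1) {β : K} (hβ : β ≠ 1)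
    (hA : IsUnit (1 - β • (P - vecMulVec h π)).det) {w : ι → K} (hw : w ⬝ᵥ h = 0) :
    w ᵥ* (1 - β • P)⁻¹ = w ᵥ* (1 - β • (P - vecMulVec h π))⁻¹ := by
  rw [inv_one_sub_smul_eq hPh hπh hβ hA, vecMul_add, vecMul_smul, ← vecMul_vecMul,
    vecMul_vecMulVec, hw, zero_smul, zero_vecMul, smul_zero, add_zero]

end Deflation

section AbelLimit

variable {𝕜 : Type*} [NormedField 𝕜] {ι : Type*} [Fintype ι] [DecidableEq ι]
  {P : Matrix ι ι 𝕜} {h π : ι → 𝕜}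

theorem tendsto_vecMul_one_sub_dotProduct_inv_one_sub_smul (hPh : P *ᵥ h = h)
    (hπh : π ⬝ᵥ h = 1) (hA : IsUnit (1 - P + vecMulVec h π)) {q : ι → 𝕜} (hq : q ⬝ᵥ h = 0)
    (r : ι → 𝕜) :
    Tendsto (fun β : 𝕜 => (q ᵥ* (1 - P)) ⬝ᵥ (1 - β • P)⁻¹ *ᵥ r) (𝓝[≠] 1) (𝓝 (q ⬝ᵥ r)) := by
  set A : 𝕜 → Matrix ι ι 𝕜 := fun β => 1 - β • (P - vecMulVec h π)
  have hA1 : A 1 = 1 - P + vecMulVec h π := by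
    simp only [A, one_smul]
    abel
  have hdet : (A 1).det ≠ 0 := by
    rw [hA1]
    exact ((isUnit_iff_isUnit_det _).1 hA).ne_zero
  have hcontA : Continuous A := continuous_const.sub (continuous_id.smul continuous_const)
  have hcontInv : ContinuousAt (fun β => (A β)⁻¹) 1 := by
    refine (continuousAt_matrix_inv _ ?_).comp hcontA.continuousAt
    rw [Ring.inverse_eq_inv']
    exact continuousAt_inv₀ hdet
  have hw : (q ᵥ* (1 - P)) ⬝ᵥ h = 0 := by
    rw [← dotProduct_mulVec, sub_mulVec, one_mulVec, hPh, sub_self, dotProduct_zero]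
  have hlimit : (q ᵥ* (1 - P)) ᵥ* (A 1)⁻¹ = q := by
    have hqA : q ᵥ* A 1 = q ᵥ* (1 - P) := by
      rw [hA1, vecMul_add, vecMul_vecMulVec, hq, zero_smul, add_zero]
    rw [← hqA, vecMul_vecMul, mul_nonsing_inv _ (isUnit_iff_ne_zero.2 hdet), vecMul_one]
  have hcont : ContinuousAt (fun β => (q ᵥ* (1 - P)) ⬝ᵥ (A β)⁻¹ *ᵥ r) 1 :=
    (continuous_const.dotProduct (continuous_id.matrix_mulVec continuous_const)).continuousAt.comp
      hcontInv
  have htendsto := hcont.tendsto.mono_left (nhdsWithin_le_nhds (s := {1}ᶜ))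
  rw [dotProduct_mulVec, hlimit] at htendsto
  refine htendsto.congr' ?_
  filter_upwards [self_mem_nhdsWithin,
    (hcontA.matrix_det.continuousAt.eventually_ne hdet).filter_mono nhdsWithin_le_nhds]
    with β hβ hdetβ
  rw [dotProduct_mulVec, dotProduct_mulVec,
    vecMul_inv_one_sub_smul_eq hPh hπh hβ (isUnit_iff_ne_zero.2 hdetβ) hw]

end AbelLimit

theorem stmt9_general {n : ℕ} (P : ℝ → Matrix (Fin n) (Fin n) ℝ)
    (π : ℝ → Fin n → ℝ) (r : Fin n → ℝ) (θ₀ : ℝ)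
    (hPdiff : ∀ i j, Differentiable ℝ (fun θ => P θ i j))
    (hProw : ∀ θ i, ∑ j, P θ i j = 1)
    (hπstat : ∀ θ, Matrix.vecMul (π θ) (P θ) = π θ)
    (hπsum : ∀ θ, ∑ i, π θ i = 1)
    (hπdiff : ∀ i, Differentiable ℝ (fun θ => π θ i))
    (hinv : IsUnit (1 - P θ₀ + Matrix.of fun (_ : Fin n) j => π θ₀ j)) :
    Filter.Tendsto
      (fun β : ℝ =>
        Matrix.vecMul (π θ₀) (Matrix.of fun i j => deriv (fun t => P t i j) θ₀) ⬝ᵥ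
          ((1 - β • P θ₀)⁻¹).mulVec r)
      (nhdsWithin 1 (Set.Iio 1))
      (nhds (deriv (fun θ => π θ ⬝ᵥ r) θ₀)) := by
  set q : Fin n → ℝ := fun i => deriv (fun t => π t i) θ₀
  have hπ' : HasDerivAt π q θ₀ := hasDerivAt_pi.2 fun i => (hπdiff i θ₀).hasDerivAt
  have hq : q ⬝ᵥ 1 = 0 := by
    refine (hπ'.dotProduct_const 1).unique ?_
    simp only [dotProduct_one, hπsum]
    exact hasDerivAt_const θ₀ 1
  have hP1 : P θ₀ *ᵥ 1 = 1 := by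
    ext i
    simp [mulVec, dotProduct, hProw]
  have hπ1 : π θ₀ ⬝ᵥ 1 = 1 := by rw [dotProduct_one, hπsum]
  rw [vecMul_deriv_eq_of_vecMul_eq_self (P' := of fun i j => deriv (fun t => P t i j) θ₀) hπ'
      (fun i j => (hPdiff i j θ₀).hasDerivAt) hπstat,
    (hπ'.dotProduct_const r).deriv]
  rw [← replicateRow, ← one_vecMulVec] at hinv
  exact (tendsto_vecMul_one_sub_dotProduct_inv_one_sub_smul hP1 hπ1 hinv hq r).mono_left
    (nhdsWithin_mono _ fun _ hβ => ne_of_lt hβ)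

/-- For a differentiable family of row-stochastic matrices `P θ`
with differentiable stationary distributions `π θ` and `I - P + eπ'`
invertible at `θ₀`, the discounted approximation `π' (∇P) J_β` with
`J_β := (I - βP)⁻¹ r` converges, as `β → 1⁻`, to the gradient `∇η` of the
average reward `η := π' r`. -/
theorem stmt9 {n : ℕ} (P : ℝ → Matrix (Fin n) (Fin n) ℝ)
    (π : ℝ → Fin n → ℝ) (r : Fin n → ℝ) (θ₀ : ℝ)
    (hPdiff : ∀ i j, Differentiable ℝ (fun θ => P θ i j))
    (hPnonneg : ∀ θ i j, 0 ≤ P θ i j)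
    (hProw : ∀ θ i, ∑ j, P θ i j = 1)
    (hπstat : ∀ θ, Matrix.vecMul (π θ) (P θ) = π θ)
    (hπnonneg : ∀ θ i, 0 ≤ π θ i)
    (hπsum : ∀ θ, ∑ i, π θ i = 1)
    (hπuniq : ∀ θ (v : Fin n → ℝ), Matrix.vecMul v (P θ) = v →
      (∀ i, 0 ≤ v i) → ∑ i, v i = 1 → v = π θ)
    (hπdiff : ∀ i, Differentiable ℝ (fun θ => π θ i))
    (hsimple : ∀ x : Fin n → ℝ, (P θ₀).mulVec x = x → ∃ c : ℝ, x = fun _ => c)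
    (hspec : ∀ μ ∈ spectrum ℂ ((P θ₀).map (Complex.ofReal)), μ = 1 ∨ ‖μ‖ < 1)
    (hinv : IsUnit (1 - P θ₀ + Matrix.of fun (_ : Fin n) j => π θ₀ j)) :
    Filter.Tendsto
      (fun β : ℝ =>
        Matrix.vecMul (π θ₀) (Matrix.of fun i j => deriv (fun t => P t i j) θ₀) ⬝ᵥ
          ((1 - β • P θ₀)⁻¹).mulVec r)
      (nhdsWithin 1 (Set.Iio 1))
      (nhds (deriv (fun θ => π θ ⬝ᵥ r) θ₀)) :=
  stmt9_general P π r θ₀ hPdiff hProw hπstat hπsum hπdiff hinv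
end

section
/- For β ∈ [0,1), the bias identity π'(∇P)J_β − ∇η = π'(∇P)[(I − βP)⁻¹ − (I − P + eπ')⁻¹] r holds, and using (∇P)e = 0 the difference can be written as π'(∇P)(Σ_{n=0}^∞ (β^n − 1)(P^n − eπ'))r. -/
/-!
Both inverses are Neumann series. The mixing bound makes `Σ βᵏ(Pᵏ - eπ')` converge, so
`(I - βP)⁻¹ = Σ βᵏ(Pᵏ - eπ') + (1 - β)⁻¹ eπ'`; and since `eπ'` is an idempotent absorbing `P` on
both sides, `(P - eπ')ᵏ⁺¹ = Pᵏ⁺¹ - eπ'`, so `(I - P + eπ')⁻¹ = Σ (Pᵏ - eπ') + eπ'`. The difference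
of the two inverses is therefore `Σ (βᵏ - 1)(Pᵏ - eπ')` plus a multiple of `eπ'`, and the latter is
killed by `π'(∇P)` because the rows of `∇P` sum to zero.
-/

open Matrix Finset

theorem sub_pow_succ_of_absorbing {R : Type*} [Ring R] {a q : R}
    (haq : a * q = q) (hqa : q * a = q) (hqq : q * q = q) (k : ℕ) :
    (a - q) ^ (k + 1) = a ^ (k + 1) - q := by
  have hpow : ∀ m : ℕ, a ^ m * q = q := fun m => by
    induction m with
    | zero => rw [pow_zero, one_mul]
    | succ m ih => rw [pow_succ, mul_assoc, haq, ih]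
  induction k with
  | zero => rw [zero_add, pow_one, pow_one]
  | succ k ih =>
    rw [pow_succ, ih, sub_mul, mul_sub, mul_sub, hpow, hqa, hqq, ← pow_succ]
    abel

theorem sum_deriv_eq_zero_of_sum_eq_const {ι : Type*} [Fintype ι] {f : ℝ → ι → ℝ} {x c : ℝ}
    (hf : ∀ j, DifferentiableAt ℝ (f · j) x) (hsum : ∀ t, ∑ j, f t j = c) :
    ∑ j, deriv (f · j) x = 0 := by
  rw [← deriv_fun_sum fun j _ => hf j, funext hsum, deriv_const]

theorem HasSum.matrix_mulVec {κ m n R : Type*} [Fintype n] [NonUnitalNonAssocSemiring R]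
    [TopologicalSpace R] [IsTopologicalSemiring R] {f : κ → Matrix m n R} {a : Matrix m n R}
    (h : HasSum f a) (v : n → R) : HasSum (fun k => f k *ᵥ v) (a *ᵥ v) :=
  h.map (mulVec.addMonoidHomLeft v) (continuous_id.matrix_mulVec continuous_const)

namespace Matrix

theorem summable_of_abs_le {κ m n : Type*} {u : κ → Matrix m n ℝ} {b : κ → ℝ} (hb : Summable b)
    (h : ∀ k i j, |u k i j| ≤ b k) : Summable u :=
  Pi.summable.2 fun i => Pi.summable.2 fun j => hb.of_norm_bounded fun k => h k i j

variable {ι : Type*} [Fintype ι]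

theorem mul_replicateRow_of_sum_eq {R : Type*} [CommSemiring R] {A : Matrix ι ι R} {c : R}
    (h : ∀ i, ∑ j, A i j = c) (w : ι → R) : A * replicateRow ι w = c • replicateRow ι w := by
  ext i j
  simp [mul_apply, ← Finset.sum_mul, h]

variable [DecidableEq ι] {R : Type*} [CommRing R] [TopologicalSpace R] [IsTopologicalRing R]
  [T2Space R]

theorem inv_one_sub_eq_of_hasSum {M S : Matrix ι ι R} (h : HasSum (M ^ ·) S) :
    (1 - M)⁻¹ = S := by
  rw [← h.tsum_eq]
  exact inv_eq_right_inv h.summable.one_sub_mul_tsum_pow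

theorem hasSum_pow_sub_of_absorbing {A Q : Matrix ι ι R}
    (hAQ : A * Q = Q) (hQA : Q * A = Q) (hQQ : Q * Q = Q)
    (h : Summable fun k => A ^ k - Q) :
    HasSum (fun k => A ^ k - Q) ((1 - A + Q)⁻¹ - Q) := by
  have htail : HasSum (fun k => (A - Q) ^ (k + 1)) (∑' k, (A ^ k - Q) - (1 - Q)) := by
    simp_rw [sub_pow_succ_of_absorbing hAQ hQA hQQ]
    simpa using (hasSum_nat_add_iff' 1).2 h.hasSum
  have hgeom : HasSum (fun k => (A - Q) ^ k) (∑' k, (A ^ k - Q) + Q) := by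
    rwa [← hasSum_nat_add_iff' 1, Finset.sum_range_one, pow_zero,
      show ∑' k, (A ^ k - Q) + Q - 1 = ∑' k, (A ^ k - Q) - (1 - Q) by abel]
  rw [show 1 - A + Q = 1 - (A - Q) by abel, inv_one_sub_eq_of_hasSum hgeom, add_sub_cancel_right]
  exact h.hasSum

theorem hasSum_pow_smul_pow_sub {A Q : Matrix ι ι ℝ} {β : ℝ} (hβ0 : 0 ≤ β) (hβ1 : β < 1)
    (h : Summable fun k => β ^ k • (A ^ k - Q)) :
    HasSum (fun k => β ^ k • (A ^ k - Q)) ((1 - β • A)⁻¹ - (1 - β)⁻¹ • Q) := by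
  have hgeom := h.hasSum.add ((hasSum_geometric_of_lt_one hβ0 hβ1).smul_const Q)
  simp only [← smul_add, sub_add_cancel, ← smul_pow] at hgeom
  rw [inv_one_sub_eq_of_hasSum hgeom, add_sub_cancel_right]
  exact h.hasSum

theorem hasSum_pow_sub_one_smul_pow_sub {A Q : Matrix ι ι ℝ}
    (hAQ : A * Q = Q) (hQA : Q * A = Q) (hQQ : Q * Q = Q) {β C ρ : ℝ} (hβ0 : 0 ≤ β)
    (hβ1 : β < 1) (hρ0 : 0 ≤ ρ) (hρ1 : ρ < 1) (hmix : ∀ k i j, |(A ^ k - Q) i j| ≤ C * ρ ^ k) :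
    HasSum (fun k => (β ^ k - 1) • (A ^ k - Q))
      ((1 - β • A)⁻¹ - (1 - A + Q)⁻¹ - (β / (1 - β)) • Q) := by
  have hb := (summable_geometric_of_lt_one hρ0 hρ1).mul_left C
  have hdisc := hasSum_pow_smul_pow_sub hβ0 hβ1 <| summable_of_abs_le hb fun k i j => by
    rw [smul_apply, smul_eq_mul, abs_mul, abs_of_nonneg (pow_nonneg hβ0 k)]
    exact (mul_le_of_le_one_left (abs_nonneg _) (pow_le_one₀ hβ0 hβ1.le)).trans (hmix k i j)
  have hfund := hasSum_pow_sub_of_absorbing hAQ hQA hQQ (summable_of_abs_le hb hmix)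
  have hcoef : (1 - β)⁻¹ = β / (1 - β) + 1 := by
    field_simp [(sub_pos.2 hβ1).ne']
    ring
  have hlimit : (1 - β • A)⁻¹ - (1 - A + Q)⁻¹ - (β / (1 - β)) • Q
      = ((1 - β • A)⁻¹ - (1 - β)⁻¹ • Q) - ((1 - A + Q)⁻¹ - Q) := by
    rw [hcoef, add_smul, one_smul]
    abel
  simp only [sub_smul, one_smul, hlimit]
  exact hdisc.sub hfund

end Matrix

theorem stmt10_general {n : ℕ} (P : ℝ → Matrix (Fin n) (Fin n) ℝ)
    (π : Fin n → ℝ) (r : Fin n → ℝ) (θ₀ : ℝ) (β C ρ : ℝ)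
    (hPdiff : ∀ i j, Differentiable ℝ (fun θ => P θ i j))
    (hProw : ∀ θ i, ∑ j, P θ i j = 1)
    (hπstat : Matrix.vecMul π (P θ₀) = π)
    (hπsum : ∑ i, π i = 1)
    (hβ0 : 0 ≤ β) (hβ1 : β < 1)
    (hρ0 : 0 < ρ) (hρ1 : ρ < 1)
    (hmix : ∀ (N : ℕ) (i j : Fin n),
      |((P θ₀ ^ N) - Matrix.of fun (_ : Fin n) j => π j) i j| ≤ C * ρ ^ N) :
    (Matrix.vecMul π (Matrix.of fun i j => deriv (fun t => P t i j) θ₀) ⬝ᵥ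
          ((1 - β • P θ₀)⁻¹).mulVec r) -
        (Matrix.vecMul π (Matrix.of fun i j => deriv (fun t => P t i j) θ₀) ⬝ᵥ
          ((1 - P θ₀ + Matrix.of fun (_ : Fin n) j => π j)⁻¹).mulVec r) =
      Matrix.vecMul π (Matrix.of fun i j => deriv (fun t => P t i j) θ₀) ⬝ᵥ
        (((1 - β • P θ₀)⁻¹ -
          (1 - P θ₀ + Matrix.of fun (_ : Fin n) j => π j)⁻¹).mulVec r) ∧
    (Matrix.vecMul π (Matrix.of fun i j => deriv (fun t => P t i j) θ₀) ⬝ᵥ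
          ((1 - β • P θ₀)⁻¹).mulVec r) -
        (Matrix.vecMul π (Matrix.of fun i j => deriv (fun t => P t i j) θ₀) ⬝ᵥ
          ((1 - P θ₀ + Matrix.of fun (_ : Fin n) j => π j)⁻¹).mulVec r) =
      Matrix.vecMul π (Matrix.of fun i j => deriv (fun t => P t i j) θ₀) ⬝ᵥ
        (∑' k : ℕ, (β ^ k - 1) •
          ((P θ₀ ^ k) - Matrix.of fun (_ : Fin n) j => π j).mulVec r) := by
  set D : Matrix (Fin n) (Fin n) ℝ := Matrix.of fun i j => deriv (fun t => P t i j) θ₀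
  rw [show (Matrix.of fun (_ : Fin n) j => π j) = replicateRow (Fin n) π from rfl] at hmix ⊢
  set Q := replicateRow (Fin n) π
  have hDrow : ∀ i, ∑ j, D i j = 0 := fun i =>
    sum_deriv_eq_zero_of_sum_eq_const (fun j => (hPdiff i j).differentiableAt) (hProw · i)
  have hDQ : (π ᵥ* D) ⬝ᵥ (Q *ᵥ r) = 0 := by
    rw [dotProduct_mulVec, vecMul_vecMul, mul_replicateRow_of_sum_eq hDrow, zero_smul,
      vecMul_zero, zero_dotProduct]
  have hAQ : P θ₀ * Q = Q := by rw [mul_replicateRow_of_sum_eq (hProw θ₀), one_smul]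
  have hQA : Q * P θ₀ = Q := by rw [← replicateRow_vecMul, hπstat]
  have hQQ : Q * Q = Q := by rw [mul_replicateRow_of_sum_eq (A := Q) (fun _ => hπsum), one_smul]
  have hbias :=
    (hasSum_pow_sub_one_smul_pow_sub hAQ hQA hQQ hβ0 hβ1 hρ0.le hρ1 hmix).matrix_mulVec r
  simp only [smul_mulVec] at hbias
  have hsplit : (π ᵥ* D) ⬝ᵥ ((1 - β • P θ₀)⁻¹ *ᵥ r) - (π ᵥ* D) ⬝ᵥ ((1 - P θ₀ + Q)⁻¹ *ᵥ r)
      = (π ᵥ* D) ⬝ᵥ (((1 - β • P θ₀)⁻¹ - (1 - P θ₀ + Q)⁻¹) *ᵥ r) := by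
    rw [sub_mulVec, dotProduct_sub]
  refine ⟨hsplit, hsplit.trans ?_⟩
  rw [hbias.tsum_eq, sub_mulVec _ ((β / (1 - β)) • Q), dotProduct_sub, smul_mulVec,
    dotProduct_smul, hDQ, smul_zero, sub_zero]

/-- Bias identity. With `J_β := (I - βP)⁻¹ r` and
`∇η := π'(∇P)(I - P + eπ')⁻¹ r`, we have
`π'(∇P)J_β - ∇η = π'(∇P)[(I - βP)⁻¹ - (I - P + eπ')⁻¹] r`, and using
`(∇P)e = 0` this difference equals `π'(∇P)(Σ_{n≥0} (β^n - 1)(P^n - eπ')) r`. -/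
theorem stmt10 {n : ℕ} (P : ℝ → Matrix (Fin n) (Fin n) ℝ)
    (π : Fin n → ℝ) (r : Fin n → ℝ) (θ₀ : ℝ) (β C ρ : ℝ)
    (hPdiff : ∀ i j, Differentiable ℝ (fun θ => P θ i j))
    (hPnonneg : ∀ θ i j, 0 ≤ P θ i j)
    (hProw : ∀ θ i, ∑ j, P θ i j = 1)
    (hπstat : Matrix.vecMul π (P θ₀) = π)
    (hπnonneg : ∀ i, 0 ≤ π i)
    (hπsum : ∑ i, π i = 1)
    (hβ0 : 0 ≤ β) (hβ1 : β < 1)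
    (hC : 0 < C) (hρ0 : 0 < ρ) (hρ1 : ρ < 1)
    (hmix : ∀ (N : ℕ) (i j : Fin n),
      |((P θ₀ ^ N) - Matrix.of fun (_ : Fin n) j => π j) i j| ≤ C * ρ ^ N) :
    (Matrix.vecMul π (Matrix.of fun i j => deriv (fun t => P t i j) θ₀) ⬝ᵥ
          ((1 - β • P θ₀)⁻¹).mulVec r) -
        (Matrix.vecMul π (Matrix.of fun i j => deriv (fun t => P t i j) θ₀) ⬝ᵥ
          ((1 - P θ₀ + Matrix.of fun (_ : Fin n) j => π j)⁻¹).mulVec r) =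
      Matrix.vecMul π (Matrix.of fun i j => deriv (fun t => P t i j) θ₀) ⬝ᵥ
        (((1 - β • P θ₀)⁻¹ -
          (1 - P θ₀ + Matrix.of fun (_ : Fin n) j => π j)⁻¹).mulVec r) ∧
    (Matrix.vecMul π (Matrix.of fun i j => deriv (fun t => P t i j) θ₀) ⬝ᵥ
          ((1 - β • P θ₀)⁻¹).mulVec r) -
        (Matrix.vecMul π (Matrix.of fun i j => deriv (fun t => P t i j) θ₀) ⬝ᵥ
          ((1 - P θ₀ + Matrix.of fun (_ : Fin n) j => π j)⁻¹).mulVec r) =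
      Matrix.vecMul π (Matrix.of fun i j => deriv (fun t => P t i j) θ₀) ⬝ᵥ
        (∑' k : ℕ, (β ^ k - 1) •
          ((P θ₀ ^ k) - Matrix.of fun (_ : Fin n) j => π j).mulVec r) :=
  stmt10_general P π r θ₀ β C ρ hPdiff hProw hπstat hπsum hβ0 hβ1 hρ0 hρ1 hmix
end

section
/- Zero-gradient theorem for finite state controllers: suppose the internal-state transition distribution satisfies ω(h|φ,g,y) = ω(h|φ,g',y) for all g, g', h, y (i.e., ω is independent of the current internal state g), and the action distribution satisfies μ(u|θ,h,y) = μ(u|θ,h',y) for all h, h', y, u (i.e., μ is independent of the internal state). Then the gradient of the long-term average reward with respect to the internal-state parameters φ is zero: ∇^φ η = 0. -/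
/-!
Because the action distribution ignores the internal state, summing the joint transition
probabilities over the next internal state gives a world-state kernel that depends neither
on the current internal state nor on `φ`. Hence the world-state marginal of any
distribution pushed forward by `P φ` or by `P φ₀` is the same. At `φ₀` the rows of the
joint chain depend only on the world state, so pushing `π φ` forward by `P φ₀` yields a
stationary distribution of `P φ₀`, which by uniqueness is `π φ₀`. Thus the world-state
marginal of `π φ` does not depend on `φ`, and neither does `η`, which only sees that
marginal.
-/

open Matrix

section Marginal

variable {α β R : Type*} [Fintype α] [Fintype β]

def fstMarginal [AddCommMonoid R] (v : α × β → R) (a : α) : R :=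
  ∑ b, v (a, b)

theorem sum_fstMarginal [AddCommMonoid R] (v : α × β → R) :
    ∑ a, fstMarginal v a = ∑ x, v x :=
  (Fintype.sum_prod_type v).symm

theorem sum_mul_fst_eq_sum_fstMarginal_mul [NonUnitalNonAssocSemiring R]
    (v : α × β → R) (f : α → R) :
    ∑ x, v x * f x.1 = ∑ a, fstMarginal v a * f a := by
  simp only [Fintype.sum_prod_type, fstMarginal, Finset.sum_mul]

variable [NonUnitalNonAssocSemiring R]

theorem fstMarginal_vecMul_eq_of_sum_snd_eq {M M' : Matrix (α × β) (α × β) R}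
    (h : ∀ x a, ∑ b, M x (a, b) = ∑ b, M' x (a, b)) (v : α × β → R) :
    fstMarginal (v ᵥ* M) = fstMarginal (v ᵥ* M') := by
  funext a
  simp only [fstMarginal, vecMul, dotProduct]
  rw [Finset.sum_comm, Finset.sum_comm (f := fun b x => v x * M' x (a, b))]
  simp only [← Finset.mul_sum, h]

theorem vecMul_eq_of_fstMarginal_eq {M : Matrix (α × β) (α × β) R}
    (hM : ∀ a b b', M (a, b) = M (a, b')) {v w : α × β → R}
    (hvw : fstMarginal v = fstMarginal w) : v ᵥ* M = w ᵥ* M := by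
  cases isEmpty_or_nonempty β with
  | inl _ => exact Subsingleton.elim _ _
  | inr hβ =>
    obtain ⟨b₀⟩ := hβ
    have hvecMul : ∀ u : α × β → R, u ᵥ* M = fun y => ∑ a, fstMarginal u a * M (a, b₀) y := by
      intro u
      funext y
      rw [← sum_mul_fst_eq_sum_fstMarginal_mul]
      exact Finset.sum_congr rfl fun x _ => by rw [← hM x.1 x.2 b₀]
    rw [hvecMul, hvecMul, hvw]

end Marginal

theorem fstMarginal_eq_of_vecMul_eq_self {α β : Type*} [Fintype α] [Fintype β]
    {P P₀ : Matrix (α × β) (α × β) ℝ}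
    (hsnd : ∀ x a, ∑ b, P x (a, b) = ∑ b, P₀ x (a, b))
    (hP₀row : ∀ a b b', P₀ (a, b) = P₀ (a, b')) (hP₀nonneg : ∀ x y, 0 ≤ P₀ x y)
    {π π₀ : α × β → ℝ} (hπstat : π ᵥ* P = π) (hπnonneg : ∀ x, 0 ≤ π x)
    (hπsum : ∑ x, π x = 1)
    (hπ₀uniq : ∀ v : α × β → ℝ, v ᵥ* P₀ = v → (∀ x, 0 ≤ v x) → ∑ x, v x = 1 → v = π₀) :
    fstMarginal π = fstMarginal π₀ := by
  set V := π ᵥ* P₀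
  have hVmarg : fstMarginal V = fstMarginal π := by
    rw [← fstMarginal_vecMul_eq_of_sum_snd_eq hsnd, hπstat]
  have hVstat : V ᵥ* P₀ = V := vecMul_eq_of_fstMarginal_eq hP₀row hVmarg
  have hVnonneg : ∀ y, 0 ≤ V y := fun y =>
    Finset.sum_nonneg fun x _ => mul_nonneg (hπnonneg x) (hP₀nonneg x y)
  have hVsum : ∑ y, V y = 1 := by
    rw [← sum_fstMarginal, hVmarg, sum_fstMarginal, hπsum]
  rw [← hVmarg, hπ₀uniq V hVstat hVnonneg hVsum]

namespace FiniteStateController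

variable {S G Y U : Type*} [Fintype Y] [Fintype U]

/-- The paper's `P(θ, φ)`, with `ω` standing for `ω(· | φ, ·, ·)` at a fixed `φ`. -/
def jointMatrix (ν : S → Y → ℝ) (ω : G → Y → G → ℝ) (μ : G → Y → U → ℝ)
    (q : S → U → S → ℝ) : Matrix (S × G) (S × G) ℝ :=
  of fun ig jh => ∑ y, ∑ u, ν ig.1 y * ω ig.2 y jh.2 * μ jh.2 y u * q ig.1 u jh.1

variable {ν : S → Y → ℝ} {ω : G → Y → G → ℝ} {μ : G → Y → U → ℝ} {q : S → U → S → ℝ}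

theorem jointMatrix_nonneg (hν : ∀ i y, 0 ≤ ν i y) (hω : ∀ g y h, 0 ≤ ω g y h)
    (hμ : ∀ h y u, 0 ≤ μ h y u) (hq : ∀ i u j, 0 ≤ q i u j) (x x' : S × G) :
    0 ≤ jointMatrix ν ω μ q x x' :=
  Finset.sum_nonneg fun _ _ => Finset.sum_nonneg fun _ _ =>
    mul_nonneg (mul_nonneg (mul_nonneg (hν _ _) (hω _ _ _)) (hμ _ _ _)) (hq _ _ _)

theorem jointMatrix_row_eq (hω : ∀ g g' y h, ω g y h = ω g' y h) (i : S) (g g' : G) :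
    jointMatrix ν ω μ q (i, g) = jointMatrix ν ω μ q (i, g') := by
  funext jh
  simp only [jointMatrix, of_apply, hω g g']

theorem sum_snd_jointMatrix [Fintype G] (hω : ∀ g y, ∑ h, ω g y h = 1)
    (hμ : ∀ h h' y u, μ h y u = μ h' y u) (i : S) (g : G) (j : S) :
    ∑ h, jointMatrix ν ω μ q (i, g) (j, h) = ∑ y, ∑ u, ν i y * μ g y u * q i u j := by
  simp only [jointMatrix, of_apply]
  rw [Finset.sum_comm]
  refine Finset.sum_congr rfl fun y _ => ?_
  rw [Finset.sum_comm]
  refine Finset.sum_congr rfl fun u _ => ?_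
  calc ∑ h, ν i y * ω g y h * μ h y u * q i u j
      = (∑ h, ω g y h) * (ν i y * μ g y u * q i u j) := by
        rw [Finset.sum_mul]
        exact Finset.sum_congr rfl fun h _ => by rw [hμ h g]; ring
    _ = ν i y * μ g y u * q i u j := by rw [hω, one_mul]

end FiniteStateController

open FiniteStateController in
theorem stmt12_general {S G Y U : Type*} [Fintype S] [Fintype G] [Fintype Y] [Fintype U]
    (ν : S → Y → ℝ) (ω : ℝ → G → Y → G → ℝ) (μ : G → Y → U → ℝ)
    (q : S → U → S → ℝ) (r : S → ℝ) (π : ℝ → S × G → ℝ) (φ₀ : ℝ)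
    (hν0 : ∀ i y, 0 ≤ ν i y)
    (hω0 : ∀ φ g y h, 0 ≤ ω φ g y h) (hω1 : ∀ φ g y, ∑ h, ω φ g y h = 1)
    (hμ0 : ∀ h y u, 0 ≤ μ h y u)
    (hq0 : ∀ i u j, 0 ≤ q i u j)
    -- `π φ` is the unique stationary distribution of the joint chain `P φ`
    (hπstat : ∀ φ, Matrix.vecMul (π φ)
        (Matrix.of fun (ig jh : S × G) =>
          ∑ y, ∑ u, ν ig.1 y * ω φ ig.2 y jh.2 * μ jh.2 y u * q ig.1 u jh.1) = π φ)
    (hπnonneg : ∀ φ sg, 0 ≤ π φ sg)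
    (hπsum : ∀ φ, ∑ sg : S × G, π φ sg = 1)
    (hπuniq : ∀ φ (v : S × G → ℝ), Matrix.vecMul v
        (Matrix.of fun (ig jh : S × G) =>
          ∑ y, ∑ u, ν ig.1 y * ω φ ig.2 y jh.2 * μ jh.2 y u * q ig.1 u jh.1) = v →
        (∀ sg, 0 ≤ v sg) → ∑ sg : S × G, v sg = 1 → v = π φ)
    -- at `φ₀`, `ω` is independent of the current internal state
    (hωindep : ∀ g g' y h, ω φ₀ g y h = ω φ₀ g' y h)
    -- and `μ` is independent of the internal state
    (hμindep : ∀ h h' y u, μ h y u = μ h' y u) :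
    deriv (fun φ => ∑ sg : S × G, π φ sg * r sg.1) φ₀ = 0 := by
  have hmarg : ∀ φ, fstMarginal (π φ) = fstMarginal (π φ₀) := fun φ =>
    fstMarginal_eq_of_vecMul_eq_self (P := jointMatrix ν (ω φ) μ q)
      (fun x j => by
        rw [sum_snd_jointMatrix (hω1 φ) hμindep, sum_snd_jointMatrix (hω1 φ₀) hμindep])
      (jointMatrix_row_eq hωindep)
      (jointMatrix_nonneg hν0 (hω0 φ₀) hμ0 hq0)
      (hπstat φ) (hπnonneg φ) (hπsum φ) (hπuniq φ₀)
  have hη : (fun φ => ∑ sg : S × G, π φ sg * r sg.1)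
      = fun _ => ∑ sg : S × G, π φ₀ sg * r sg.1 := by
    funext φ
    rw [sum_mul_fst_eq_sum_fstMarginal_mul, sum_mul_fst_eq_sum_fstMarginal_mul, hmarg]
  rw [hη, deriv_const]

/-- Zero-gradient theorem for finite state controllers. Let
`P φ` be the joint world/internal-state chain of a finite state controller
whose I-state transition `ω` depends on a real parameter `φ`, with (unique)
stationary distribution `π φ` and average reward
`η φ := Σ_{i,g} π_{i,g}(φ) r(i)`. If at `φ₀` the I-state transition
distribution is independent of the current I-state,
`ω(h|φ₀,g,y) = ω(h|φ₀,g',y)`, and the action distribution is independent of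
the I-state, `μ(u|h,y) = μ(u|h',y)`, then `∇^φ η = 0` at `φ₀`. -/
theorem stmt12 {S G Y U : Type*} [Fintype S] [Fintype G] [Fintype Y] [Fintype U]
    (ν : S → Y → ℝ) (ω : ℝ → G → Y → G → ℝ) (μ : G → Y → U → ℝ)
    (q : S → U → S → ℝ) (r : S → ℝ) (π : ℝ → S × G → ℝ) (φ₀ : ℝ)
    (hν0 : ∀ i y, 0 ≤ ν i y) (hν1 : ∀ i, ∑ y, ν i y = 1)
    (hω0 : ∀ φ g y h, 0 ≤ ω φ g y h) (hω1 : ∀ φ g y, ∑ h, ω φ g y h = 1)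
    (hωdiff : ∀ g y h, Differentiable ℝ (fun φ => ω φ g y h))
    (hμ0 : ∀ h y u, 0 ≤ μ h y u) (hμ1 : ∀ h y, ∑ u, μ h y u = 1)
    (hq0 : ∀ i u j, 0 ≤ q i u j) (hq1 : ∀ i u, ∑ j, q i u j = 1)
    -- `π φ` is the unique stationary distribution of the joint chain `P φ`
    (hπstat : ∀ φ, Matrix.vecMul (π φ)
        (Matrix.of fun (ig jh : S × G) =>
          ∑ y, ∑ u, ν ig.1 y * ω φ ig.2 y jh.2 * μ jh.2 y u * q ig.1 u jh.1) = π φ)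
    (hπnonneg : ∀ φ sg, 0 ≤ π φ sg)
    (hπsum : ∀ φ, ∑ sg : S × G, π φ sg = 1)
    (hπuniq : ∀ φ (v : S × G → ℝ), Matrix.vecMul v
        (Matrix.of fun (ig jh : S × G) =>
          ∑ y, ∑ u, ν ig.1 y * ω φ ig.2 y jh.2 * μ jh.2 y u * q ig.1 u jh.1) = v →
        (∀ sg, 0 ≤ v sg) → ∑ sg : S × G, v sg = 1 → v = π φ)
    (hπdiff : ∀ sg, Differentiable ℝ (fun φ => π φ sg))
    -- at `φ₀`, `ω` is independent of the current internal state
    (hωindep : ∀ g g' y h, ω φ₀ g y h = ω φ₀ g' y h)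
    -- and `μ` is independent of the internal state
    (hμindep : ∀ h h' y u, μ h y u = μ h' y u) :
    deriv (fun φ => ∑ sg : S × G, π φ sg * r sg.1) φ₀ = 0 :=
  stmt12_general ν ω μ q r π φ₀ hν0 hω0 hω1 hμ0 hq0 hπstat hπnonneg hπsum hπuniq hωindep hμindep
end
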